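/- Let k = 1, 1 < m < n, and let Z ⊆ ℝP^{n-1} × Gr_m(ℝⁿ) be the incidence variety of pairs (l, H) with l ⊆ H. Then the natural projection from the conormal bundle of Z with the zero section removed, T*_Z(Gr₁ × Gr_m) \ 0, to T*(Gr₁) \ 0 is a submersion. -/

import Mathlib

noncomputable section

variable (n : ℕ)

/-- Shorthand: `V = ℝⁿ`. -/
abbrev V (n : ℕ) := EuclideanSpace ℝ (Fin n)

/-- `P` is the orthogonal projection onto an `m`-dimensional subspace: this is the standard
smooth model of the Grassmannian `Gr_m(ℝⁿ)` as a subset of `End(ℝⁿ)`. -/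
def IsGrassPt (m : ℕ) (P : V n →L[ℝ] V n) : Prop :=
  P.comp P = P ∧ ContinuousLinearMap.adjoint P = P ∧
    Module.finrank ℝ (LinearMap.range (P : V n →ₗ[ℝ] V n)) = m

/-- The conormal bundle (minus the zero section) of the incidence variety
`Z = {(l,H) : l ⊆ H} ⊆ Gr₁ × Gr_m`, realized as the set of triples `(Q,P,A)`:
`Q`, `P` orthogonal projections onto `l` (rank 1) and `H` (rank `m`) with `l ⊆ H`, and
`A ≠ 0` an operator encoding a covector `v ∈ l ⊗ H^⊥` (i.e. `range A ⊆ l`, `H ⊆ ker A`). -/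
def ConormalZ (m : ℕ) : Set ((V n →L[ℝ] V n) × (V n →L[ℝ] V n) × (V n →L[ℝ] V n)) :=
  {p | IsGrassPt n 1 p.1 ∧ IsGrassPt n m p.2.1 ∧
    LinearMap.range (p.1 : V n →ₗ[ℝ] V n) ≤ LinearMap.range (p.2.1 : V n →ₗ[ℝ] V n) ∧
    LinearMap.range (p.2.2 : V n →ₗ[ℝ] V n) ≤ LinearMap.range (p.1 : V n →ₗ[ℝ] V n) ∧
    LinearMap.range (p.2.1 : V n →ₗ[ℝ] V n) ≤ LinearMap.ker (p.2.2 : V n →ₗ[ℝ] V n) ∧ p.2.2 ≠ 0}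

/-- The punctured cotangent bundle `T*Gr₁ \ 0`, realized as pairs `(Q,A)` with `Q` a rank-one
orthogonal projection (a point `l ∈ Gr₁`) and `A ≠ 0` a covector in `l ⊗ l^⊥`
(`range A ⊆ l`, `l ⊆ ker A`). -/
def CotGr1 : Set ((V n →L[ℝ] V n) × (V n →L[ℝ] V n)) :=
  {q | IsGrassPt n 1 q.1 ∧ LinearMap.range (q.2 : V n →ₗ[ℝ] V n) ≤ LinearMap.range (q.1 : V n →ₗ[ℝ] V n) ∧
    LinearMap.range (q.1 : V n →ₗ[ℝ] V n) ≤ LinearMap.ker (q.2 : V n →ₗ[ℝ] V n) ∧ q.2 ≠ 0}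

/-- Tangent set of a subset of a normed space at a point, via smooth curves. -/
def tangentSetAt {W : Type*} [NormedAddCommGroup W] [NormedSpace ℝ W] (S : Set W) (x : W) :
    Set W :=
  {v | ∃ γ : ℝ → W, ContDiff ℝ (⊤ : ℕ∞) γ ∧ γ 0 = x ∧ (∀ t, γ t ∈ S) ∧ deriv γ 0 = v}

namespace Stmt8Aux

variable {n : ℕ}

open Module

lemma range_le_of_mul {p q : V n →L[ℝ] V n} (h : p * q = q) :
    LinearMap.range (q : V n →ₗ[ℝ] V n) ≤ LinearMap.range (p : V n →ₗ[ℝ] V n) := by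
  rintro x ⟨y, rfl⟩
  exact ⟨q y, by rw [ContinuousLinearMap.coe_coe, ContinuousLinearMap.coe_coe, ← ContinuousLinearMap.mul_apply, h]⟩

lemma range_mul_le (p q : V n →L[ℝ] V n) :
    LinearMap.range ((p * q : V n →L[ℝ] V n) : V n →ₗ[ℝ] V n) ≤ LinearMap.range (p : V n →ₗ[ℝ] V n) := by
  rintro x ⟨y, rfl⟩
  exact ⟨q y, by rw [ContinuousLinearMap.coe_coe, ContinuousLinearMap.coe_coe, ← ContinuousLinearMap.mul_apply]⟩

lemma mul_eq_of_range_le {p q : V n →L[ℝ] V n} (hp : p * p = p)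
    (h : LinearMap.range (q : V n →ₗ[ℝ] V n) ≤ LinearMap.range (p : V n →ₗ[ℝ] V n)) : p * q = q := by
  ext x : 1
  obtain ⟨y, hy⟩ := h (LinearMap.mem_range_self (q : V n →ₗ[ℝ] V n) x)
  rw [ContinuousLinearMap.mul_apply, ← ContinuousLinearMap.coe_coe q, ← hy, ContinuousLinearMap.coe_coe,
    ← ContinuousLinearMap.mul_apply, hp]

lemma mul_eq_zero_of_range_le_ker {a p : V n →L[ℝ] V n}
    (h : LinearMap.range (p : V n →ₗ[ℝ] V n) ≤ LinearMap.ker (a : V n →ₗ[ℝ] V n)) : a * p = 0 := by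
  refine ContinuousLinearMap.ext fun x => ?_
  have := h (LinearMap.mem_range_self (p : V n →ₗ[ℝ] V n) x)
  simpa [ContinuousLinearMap.mul_apply] using this

lemma range_le_ker_of_mul {a p : V n →L[ℝ] V n} (h : a * p = 0) :
    LinearMap.range (p : V n →ₗ[ℝ] V n) ≤ LinearMap.ker (a : V n →ₗ[ℝ] V n) := by
  rintro x ⟨y, rfl⟩
  have : (a * p) y = 0 := by rw [h]; rfl
  simpa [ContinuousLinearMap.mul_apply] using this

lemma range_mul_eq_map (f g : V n →L[ℝ] V n) :
    LinearMap.range ((f * g : V n →L[ℝ] V n) : V n →ₗ[ℝ] V n)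
      = Submodule.map (f : V n →ₗ[ℝ] V n) (LinearMap.range (g : V n →ₗ[ℝ] V n)) := by
  ext x
  constructor
  · rintro ⟨y, rfl⟩
    exact ⟨g y, LinearMap.mem_range_self (g : V n →ₗ[ℝ] V n) y, rfl⟩
  · rintro ⟨z, ⟨y, rfl⟩, rfl⟩
    exact ⟨y, rfl⟩

lemma finrank_range_mul_le (f g : V n →L[ℝ] V n) :
    finrank ℝ (LinearMap.range ((f * g : V n →L[ℝ] V n) : V n →ₗ[ℝ] V n)) ≤ finrank ℝ (LinearMap.range (g : V n →ₗ[ℝ] V n)) := by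
  rw [range_mul_eq_map]
  exact Submodule.finrank_map_le _ _

lemma rank_add {p q : V n →L[ℝ] V n} (hp : p * p = p) (hq : q * q = q)
    (hpq : p * q = 0) (hqp : q * p = 0) :
    finrank ℝ (LinearMap.range ((p + q : V n →L[ℝ] V n) : V n →ₗ[ℝ] V n))
      = finrank ℝ (LinearMap.range (p : V n →ₗ[ℝ] V n)) + finrank ℝ (LinearMap.range (q : V n →ₗ[ℝ] V n)) := by
  have hsup : LinearMap.range ((p + q : V n →L[ℝ] V n) : V n →ₗ[ℝ] V n) = LinearMap.range (p : V n →ₗ[ℝ] V n) ⊔ LinearMap.range (q : V n →ₗ[ℝ] V n) := by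
    apply le_antisymm
    · rintro x ⟨y, rfl⟩
      exact Submodule.add_mem_sup (LinearMap.mem_range_self (p : V n →ₗ[ℝ] V n) y) (LinearMap.mem_range_self (q : V n →ₗ[ℝ] V n) y)
    · apply sup_le
      · rintro x ⟨y, rfl⟩
        refine ⟨p y, ?_⟩
        have h1 : p (p y) = p y := by rw [← ContinuousLinearMap.mul_apply, hp]
        have h2 : q (p y) = 0 := by
          rw [← ContinuousLinearMap.mul_apply, hqp]; rfl
        simp [ContinuousLinearMap.add_apply, h1, h2]
      · rintro x ⟨y, rfl⟩
        refine ⟨q y, ?_⟩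
        have h1 : q (q y) = q y := by rw [← ContinuousLinearMap.mul_apply, hq]
        have h2 : p (q y) = 0 := by
          rw [← ContinuousLinearMap.mul_apply, hpq]; rfl
        simp [ContinuousLinearMap.add_apply, h1, h2]
  have hinf : LinearMap.range (p : V n →ₗ[ℝ] V n) ⊓ LinearMap.range (q : V n →ₗ[ℝ] V n) = ⊥ := by
    rw [eq_bot_iff]
    rintro x hx
    obtain ⟨⟨a, ha⟩, ⟨b, hb⟩⟩ := Submodule.mem_inf.1 hx
    have h1 : p x = x := by rw [← ha, ContinuousLinearMap.coe_coe, ← ContinuousLinearMap.mul_apply, hp]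
    have h2 : p x = 0 := by
      rw [← hb, ContinuousLinearMap.coe_coe, ← ContinuousLinearMap.mul_apply, hpq]; rfl
    simpa using h1.symm.trans h2
  have h := Submodule.finrank_sup_add_finrank_inf_eq (LinearMap.range (p : V n →ₗ[ℝ] V n)) (LinearMap.range (q : V n →ₗ[ℝ] V n))
  rw [hinf, finrank_bot, add_zero] at h
  rw [hsup, h]

lemma key_identity {Q A : V n →L[ℝ] V n} (hQ2 : Q * Q = Q)
    (hQ1 : finrank ℝ (LinearMap.range (Q : V n →ₗ[ℝ] V n)) = 1)
    (hAQ : LinearMap.range (A : V n →ₗ[ℝ] V n) ≤ LinearMap.range (Q : V n →ₗ[ℝ] V n))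
    {e₀ : V n} (he : A e₀ ≠ 0) :
    A * star A * A = (‖(star A * A) e₀‖ ^ 2 / ‖A e₀‖ ^ 2) • A := by
  set u := A e₀ with hu
  have hu0 : u ≠ 0 := he
  have hsp : Submodule.span ℝ {u} = LinearMap.range (Q : V n →ₗ[ℝ] V n) := by
    apply Submodule.eq_of_le_of_finrank_le
    · exact (Submodule.span_singleton_le_iff_mem _ _).2 (hAQ (LinearMap.mem_range_self (A : V n →ₗ[ℝ] V n) e₀))
    · rw [hQ1, finrank_span_singleton hu0]
  have hnu : ‖u‖ ^ 2 ≠ 0 := pow_ne_zero _ (norm_ne_zero_iff.2 hu0)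
  have hrep : ∀ x, A x = ((inner ℝ u (A x) : ℝ) / ‖u‖ ^ 2) • u := by
    intro x
    obtain ⟨r, hr⟩ := Submodule.mem_span_singleton.1
      (hsp ▸ hAQ (LinearMap.mem_range_self (A : V n →ₗ[ℝ] V n) x))
    rw [← ContinuousLinearMap.coe_coe A, ← hr, real_inner_smul_right, real_inner_self_eq_norm_sq]
    congr 1
    field_simp
  have hadj : ∀ y, (inner ℝ u (A y) : ℝ) = inner ℝ (star A u) y := by
    intro y
    rw [ContinuousLinearMap.star_eq_adjoint]
    exact (ContinuousLinearMap.adjoint_inner_left A y u).symm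
  have hc : ‖(star A * A) e₀‖ ^ 2 / ‖A e₀‖ ^ 2 = ‖star A u‖ ^ 2 / ‖u‖ ^ 2 := by
    rw [ContinuousLinearMap.mul_apply]
  refine ContinuousLinearMap.ext fun x => ?_
  rw [ContinuousLinearMap.mul_apply, ContinuousLinearMap.mul_apply,
    ContinuousLinearMap.smul_apply, hc]
  have h2 : A (star A u) = (‖star A u‖ ^ 2 / ‖u‖ ^ 2) • u := by
    rw [hrep (star A u), hadj (star A u), real_inner_self_eq_norm_sq]
  calc A ((star A) (A x))
      = A ((star A) (((inner ℝ u (A x) : ℝ) / ‖u‖ ^ 2) • u)) := by rw [← hrep x]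
    _ = ((inner ℝ u (A x) : ℝ) / ‖u‖ ^ 2) • A ((star A) u) := by rw [map_smul, map_smul]
    _ = ((inner ℝ u (A x) : ℝ) / ‖u‖ ^ 2) • ((‖star A u‖ ^ 2 / ‖u‖ ^ 2) • u) := by rw [h2]
    _ = (‖star A u‖ ^ 2 / ‖u‖ ^ 2) • (((inner ℝ u (A x) : ℝ) / ‖u‖ ^ 2) • u) := by
        rw [smul_comm]
    _ = (‖star A u‖ ^ 2 / ‖u‖ ^ 2) • A x := by rw [← hrep x]

end Stmt8Aux
namespace Stmt8Aux

variable {n : ℕ}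
open Module

set_option maxHeartbeats 1000000
set_option synthInstance.maxHeartbeats 1000000

instance : SMulCommClass ℝ (V n →L[ℝ] V n) (V n →L[ℝ] V n) :=
  ⟨fun c S A => by
    refine ContinuousLinearMap.ext fun x => ?_
    simp [ContinuousLinearMap.mul_apply, smul_eq_mul]⟩

instance : IsScalarTower ℝ (V n →L[ℝ] V n) (V n →L[ℝ] V n) :=
  ⟨fun c S A => by
    refine ContinuousLinearMap.ext fun x => ?_
    simp [ContinuousLinearMap.mul_apply, smul_eq_mul]⟩

def cF (A : V n →L[ℝ] V n) (e₀ : V n) : ℝ := ‖(star A * A) e₀‖ ^ 2 / ‖A e₀‖ ^ 2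

def RF (A : V n →L[ℝ] V n) (e₀ : V n) : V n →L[ℝ] V n := (cF A e₀)⁻¹ • (star A * A)

def CF (Q A : V n →L[ℝ] V n) (e₀ : V n) : V n →L[ℝ] V n := 1 - Q - RF A e₀

def XF (W0 Q A : V n →L[ℝ] V n) (e₀ : V n) : V n →L[ℝ] V n :=
  W0 * CF Q A e₀ * W0 + (1 - W0)

def WF (W0 Q A : V n →L[ℝ] V n) (e₀ : V n) : V n →L[ℝ] V n :=
  CF Q A e₀ * W0 * Ring.inverse (XF W0 Q A e₀) * (W0 * CF Q A e₀)

def PF (W0 Q A : V n →L[ℝ] V n) (e₀ : V n) : V n →L[ℝ] V n := Q + WF W0 Q A e₀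

lemma starAA_ne_zero {A : V n →L[ℝ] V n} {e₀ : V n} (he : A e₀ ≠ 0) :
    (star A * A) e₀ ≠ 0 := by
  intro h
  have : (inner ℝ ((star A * A) e₀) e₀ : ℝ) = ‖A e₀‖ ^ 2 := by
    rw [ContinuousLinearMap.mul_apply, ContinuousLinearMap.star_eq_adjoint,
      ContinuousLinearMap.adjoint_inner_left, real_inner_self_eq_norm_sq]
  rw [h] at this
  simp at this
  exact he (by simpa [norm_eq_zero] using (pow_eq_zero_iff (n := 2) (by norm_num)).1 this.symm)

lemma cF_ne_zero {A : V n →L[ℝ] V n} {e₀ : V n} (he : A e₀ ≠ 0) : cF A e₀ ≠ 0 :=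
  div_ne_zero (pow_ne_zero _ (norm_ne_zero_iff.2 (starAA_ne_zero he)))
    (pow_ne_zero _ (norm_ne_zero_iff.2 he))

lemma star_RF (A : V n →L[ℝ] V n) (e₀ : V n) : star (RF A e₀) = RF A e₀ := by
  simp [RF, star_smul, star_mul, star_star]

/-- The heart of the construction: all algebraic properties of the lifted projection. -/
lemma conormal_main {Q A W0 : V n →L[ℝ] V n} {e₀ : V n}
    (hQ2 : Q * Q = Q) (hQs : star Q = Q) (hQ1 : finrank ℝ (LinearMap.range (Q : V n →ₗ[ℝ] V n)) = 1)
    (hAQ : LinearMap.range (A : V n →ₗ[ℝ] V n) ≤ LinearMap.range (Q : V n →ₗ[ℝ] V n))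
    (hQA : LinearMap.range (Q : V n →ₗ[ℝ] V n) ≤ LinearMap.ker (A : V n →ₗ[ℝ] V n))
    (hW2 : W0 * W0 = W0) (hWs : star W0 = W0)
    (he : A e₀ ≠ 0) (hX : IsUnit (XF W0 Q A e₀)) :
    (PF W0 Q A e₀) * (PF W0 Q A e₀) = PF W0 Q A e₀ ∧
    star (PF W0 Q A e₀) = PF W0 Q A e₀ ∧
    finrank ℝ (LinearMap.range ((PF W0 Q A e₀ : V n →L[ℝ] V n) : V n →ₗ[ℝ] V n))
      = 1 + finrank ℝ (LinearMap.range (W0 : V n →ₗ[ℝ] V n)) ∧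
    LinearMap.range (Q : V n →ₗ[ℝ] V n) ≤ LinearMap.range ((PF W0 Q A e₀ : V n →L[ℝ] V n) : V n →ₗ[ℝ] V n) ∧
    LinearMap.range ((PF W0 Q A e₀ : V n →L[ℝ] V n) : V n →ₗ[ℝ] V n) ≤ LinearMap.ker (A : V n →ₗ[ℝ] V n) := by
  set c : ℝ := cF A e₀ with hc
  set R : V n →L[ℝ] V n := RF A e₀ with hR
  set C : V n →L[ℝ] V n := CF Q A e₀ with hCdef
  set X : V n →L[ℝ] V n := XF W0 Q A e₀ with hXdef
  set iX : V n →L[ℝ] V n := Ring.inverse X with hiXdef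
  set W : V n →L[ℝ] V n := WF W0 Q A e₀ with hWdef
  have hc0 : c ≠ 0 := cF_ne_zero he
  have hkey : A * star A * A = c • A := key_identity hQ2 hQ1 hAQ he
  have hAQ0 : A * Q = 0 := mul_eq_zero_of_range_le_ker hQA
  have hQsA : Q * star A = 0 := by
    have := congrArg star hAQ0
    rwa [star_mul, hQs, star_zero (R := V n →L[ℝ] V n)] at this
  -- facts about R
  have hSS : (star A * A) * (star A * A) = c • (star A * A) := by
    have h1 : (star A * A) * (star A * A) = star A * (A * star A * A) := by
      simp only [mul_assoc]
    rw [h1, hkey, mul_smul_comm]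
  have hR2 : R * R = R := by
    rw [hR, RF, ← hc, smul_mul_assoc, mul_smul_comm, hSS, smul_smul, smul_smul]
    congr 1
    field_simp
  have hAR : A * R = A := by
    rw [hR, RF, ← hc, mul_smul_comm, ← mul_assoc, hkey, smul_smul,
      inv_mul_cancel₀ hc0, one_smul]
  have hQR : Q * R = 0 := by
    rw [hR, RF, ← hc, mul_smul_comm, ← mul_assoc, hQsA, zero_mul, smul_zero]
  have hRQ : R * Q = 0 := by
    rw [hR, RF, ← hc, smul_mul_assoc, mul_assoc, hAQ0, mul_zero, smul_zero]
  have hRs : star R = R := star_RF A e₀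
  -- facts about C
  have hC2 : C * C = C := by
    rw [hCdef, CF, ← hR]
    simp only [sub_mul, mul_sub, one_mul, mul_one, hQ2, hR2, hQR, hRQ]
    abel
  have hCs : star C = C := by
    rw [hCdef, CF, ← hR]
    rw [star_sub (1 - Q) R, star_sub (1 : V n →L[ℝ] V n) Q, star_one, hQs, hRs]
  have hQC : Q * C = 0 := by
    rw [hCdef, CF, ← hR]
    simp only [mul_sub, mul_one, hQ2, hQR, sub_zero, sub_self]
  have hCQ : C * Q = 0 := by
    rw [hCdef, CF, ← hR]
    simp only [sub_mul, one_mul, hQ2, hRQ, sub_zero, sub_self]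
  have hAC : A * C = 0 := by
    rw [hCdef, CF, ← hR]
    simp only [mul_sub, mul_one, hAQ0, hAR, sub_zero, sub_self]
  -- facts about X
  have hXW0 : X * W0 = W0 * C * W0 := by
    rw [hXdef, XF, ← hCdef, add_mul, sub_mul, one_mul,
      mul_assoc (W0 * C) W0 W0, hW2, sub_self, add_zero]
  have hW0X : W0 * X = W0 * C * W0 := by
    rw [hXdef, XF, ← hCdef, mul_add, mul_sub, mul_one,
      ← mul_assoc W0 (W0 * C) W0, ← mul_assoc W0 W0 C, hW2, sub_self, add_zero]
  have hcomm : X * W0 = W0 * X := by rw [hXW0, hW0X]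
  have hXs : star X = X := by
    rw [hXdef, XF, ← hCdef]
    rw [star_add (W0 * C * W0) (1 - W0), star_sub (1 : V n →L[ℝ] V n) W0, star_mul (W0 * C) W0,
      star_mul W0 C, star_one, hWs, hCs, mul_assoc]
  have hiX1 : X * iX = 1 := Ring.mul_inverse_cancel X hX
  have hiX2 : iX * X = 1 := Ring.inverse_mul_cancel X hX
  have hiXW : iX * W0 = W0 * iX := by
    calc iX * W0 = iX * W0 * (X * iX) := by rw [hiX1, mul_one]
      _ = iX * (W0 * X) * iX := by simp only [mul_assoc]
      _ = iX * (X * W0) * iX := by rw [hcomm]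
      _ = iX * X * (W0 * iX) := by simp only [mul_assoc]
      _ = W0 * iX := by rw [hiX2, one_mul]
  have hiXs : star iX = iX := by
    have h1 : star iX * X = 1 := by
      rw [← hXs, ← star_mul, hiX1, star_one]
    calc star iX = star iX * (X * iX) := by rw [hiX1, mul_one]
      _ = star iX * X * iX := by rw [mul_assoc]
      _ = iX := by rw [h1, one_mul]
  -- applied (right-associated) versions
  have hW2' : ∀ z : V n →L[ℝ] V n, W0 * (W0 * z) = W0 * z := fun z => by
    rw [← mul_assoc, hW2]
  have hC2' : ∀ z : V n →L[ℝ] V n, C * (C * z) = C * z := fun z => by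
    rw [← mul_assoc, hC2]
  have hiX2' : ∀ z : V n →L[ℝ] V n, iX * (X * z) = z := fun z => by
    rw [← mul_assoc, hiX2, one_mul]
  have hW0CW0 : W0 * (C * W0) = X * W0 := by rw [← mul_assoc, ← hXW0]
  have hXW0' : ∀ z : V n →L[ℝ] V n, W0 * (C * (W0 * z)) = X * (W0 * z) := fun z => by
    rw [← mul_assoc C W0 z, ← mul_assoc, ← mul_assoc, ← hXW0, mul_assoc]
  have hQC' : ∀ z : V n →L[ℝ] V n, Q * (C * z) = 0 := fun z => by
    rw [← mul_assoc, hQC, zero_mul]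
  have hAC' : ∀ z : V n →L[ℝ] V n, A * (C * z) = 0 := fun z => by
    rw [← mul_assoc, hAC, zero_mul]
  -- facts about W
  have hfix : W * (C * W0) = C * W0 := by
    rw [hWdef, WF, ← hCdef, ← hXdef, ← hiXdef]
    simp only [mul_assoc]
    rw [hC2', hW0CW0, hiX2', hW2]
  have hWW : W * W = W := by
    rw [hWdef, WF, ← hCdef, ← hXdef, ← hiXdef]
    simp only [mul_assoc]
    rw [hC2', hXW0', hiX2', hW2']
  have hWs' : star W = W := by
    rw [hWdef, WF, ← hCdef, ← hXdef, ← hiXdef]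
    simp only [star_mul, hCs, hWs, hiXs, mul_assoc]
  have hQW : Q * W = 0 := by
    rw [hWdef, WF, ← hCdef, ← hXdef, ← hiXdef]
    simp only [mul_assoc]
    rw [hQC']
  have hWQ : W * Q = 0 := by
    rw [hWdef, WF, ← hCdef, ← hXdef, ← hiXdef]
    simp only [mul_assoc]
    rw [hCQ]
    simp only [mul_zero]
  have hAW : A * W = 0 := by
    rw [hWdef, WF, ← hCdef, ← hXdef, ← hiXdef]
    simp only [mul_assoc]
    rw [hAC']
  -- rank of W
  have hWsplit : W = (C * W0) * (iX * (W0 * C)) := by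
    rw [hWdef, WF, ← hCdef, ← hXdef, ← hiXdef]
    simp only [mul_assoc]
  have hrangeW : LinearMap.range (W : V n →ₗ[ℝ] V n) = LinearMap.range ((C * W0 : V n →L[ℝ] V n) : V n →ₗ[ℝ] V n) := by
    apply le_antisymm
    · rw [hWsplit]; exact range_mul_le _ _
    · have h := range_mul_le W (C * W0)
      rwa [hfix] at h
  have hco : (W0 * (iX * (W0 * C))) * (C * W0) = W0 := by
    simp only [mul_assoc]
    rw [hC2', hW0CW0, hiX2', hW2]
  have hrankW : finrank ℝ (LinearMap.range (W : V n →ₗ[ℝ] V n)) = finrank ℝ (LinearMap.range (W0 : V n →ₗ[ℝ] V n)) := by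
    apply le_antisymm
    · rw [hrangeW]
      exact finrank_range_mul_le C W0
    · have h1 : finrank ℝ (LinearMap.range (W0 : V n →ₗ[ℝ] V n))
          ≤ finrank ℝ (LinearMap.range ((C * W0 : V n →L[ℝ] V n) : V n →ₗ[ℝ] V n)) := by
        conv_lhs => rw [← hco]
        exact finrank_range_mul_le _ _
      rwa [← hrangeW] at h1
  -- assemble P
  have hPdef : PF W0 Q A e₀ = Q + W := by rw [PF, hWdef]
  refine ⟨?_, ?_, ?_, ?_, ?_⟩
  · rw [hPdef]
    simp only [add_mul, mul_add, hQ2, hWW, hQW, hWQ, add_zero, zero_add]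
  · rw [hPdef, star_add Q W, hQs, hWs']
  · rw [hPdef, rank_add hQ2 hWW hQW hWQ, hQ1, hrankW]
  · rw [hPdef]
    apply range_le_of_mul (q := Q)
    simp only [add_mul, hQ2, hWQ, add_zero]
  · rw [hPdef]
    apply range_le_ker_of_mul
    simp only [mul_add, hAQ0, hAW, add_zero]

/-- At the base point the construction returns the original projection. -/
lemma base_point {Q A W0 : V n →L[ℝ] V n} (e₀ : V n)
    (hQs : star Q = Q) (hWs : star W0 = W0) (hW2 : W0 * W0 = W0)
    (hQW0 : Q * W0 = 0) (hAW0 : A * W0 = 0) :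
    XF W0 Q A e₀ = 1 ∧ PF W0 Q A e₀ = Q + W0 := by
  have hRW0 : RF A e₀ * W0 = 0 := by
    rw [RF, smul_mul_assoc, mul_assoc, hAW0, mul_zero, smul_zero]
  have hCW0 : CF Q A e₀ * W0 = W0 := by
    rw [CF, sub_mul, sub_mul, one_mul, hQW0, hRW0, sub_zero, sub_zero]
  have hCs : star (CF Q A e₀) = CF Q A e₀ := by
    rw [CF, star_sub (1 - Q) (RF A e₀), star_sub (1 : V n →L[ℝ] V n) Q, star_one, hQs, star_RF]
  have hW0C : W0 * CF Q A e₀ = W0 := by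
    have h := congrArg star hCW0
    rwa [star_mul, hCs, hWs] at h
  have hX1 : XF W0 Q A e₀ = 1 := by
    rw [XF, hW0C, hW2]
    abel
  refine ⟨hX1, ?_⟩
  rw [PF, WF, hX1, Ring.inverse_one, mul_one, hCW0, hW0C, hW2]

end Stmt8Aux
namespace Stmt8Aux

variable {n : ℕ}
open Module

set_option maxHeartbeats 1000000
set_option synthInstance.maxHeartbeats 1000000

lemma contDiffOn_XF {W0 : V n →L[ℝ] V n} {e₀ : V n} {q a : ℝ → V n →L[ℝ] V n}
    {S : Set ℝ} (hq : ContDiff ℝ (⊤ : ℕ∞) q) (ha : ContDiff ℝ (⊤ : ℕ∞) a)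
    (hne : ∀ t ∈ S, a t e₀ ≠ 0) :
    ContDiffOn ℝ (⊤ : ℕ∞) (fun t => CF (q t) (a t) e₀) S ∧
    ContDiffOn ℝ (⊤ : ℕ∞) (fun t => XF W0 (q t) (a t) e₀) S := by
  have hsa : ContDiff ℝ (⊤ : ℕ∞) (fun t => star (a t)) :=
    ((starL' ℝ : (V n →L[ℝ] V n) ≃L[ℝ]
      (V n →L[ℝ] V n)).toContinuousLinearMap.contDiff).comp ha
  have hSmul : ContDiff ℝ (⊤ : ℕ∞) (fun t => star (a t) * a t) := hsa.mul ha
  have happ : ContDiff ℝ (⊤ : ℕ∞) (fun t => (star (a t) * a t) e₀) := hSmul.clm_apply contDiff_const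
  have happ2 : ContDiff ℝ (⊤ : ℕ∞) (fun t => a t e₀) := ha.clm_apply contDiff_const
  have hnum := ContDiff.norm_sq ℝ happ
  have hden := ContDiff.norm_sq ℝ happ2
  have hcf : ContDiffOn ℝ (⊤ : ℕ∞) (fun t => cF (a t) e₀) S := by
    simp only [cF]
    exact hnum.contDiffOn.div hden.contDiffOn
      (fun t ht => pow_ne_zero _ (norm_ne_zero_iff.2 (hne t ht)))
  have hcinv : ContDiffOn ℝ (⊤ : ℕ∞) (fun t => (cF (a t) e₀)⁻¹) S :=
    hcf.inv (fun t ht => cF_ne_zero (hne t ht))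
  have hRF : ContDiffOn ℝ (⊤ : ℕ∞) (fun t => RF (a t) e₀) S := by
    simp only [RF]
    exact hcinv.smul hSmul.contDiffOn
  have hCF : ContDiffOn ℝ (⊤ : ℕ∞) (fun t => CF (q t) (a t) e₀) S := by
    simp only [CF]
    exact (contDiffOn_const.sub hq.contDiffOn).sub hRF
  refine ⟨hCF, ?_⟩
  simp only [XF]
  exact ((contDiffOn_const.mul hCF).mul contDiffOn_const).add contDiffOn_const

lemma contDiffOn_PF {W0 : V n →L[ℝ] V n} {e₀ : V n} {q a : ℝ → V n →L[ℝ] V n}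
    {S : Set ℝ} (hS : IsOpen S) (hq : ContDiff ℝ (⊤ : ℕ∞) q) (ha : ContDiff ℝ (⊤ : ℕ∞) a)
    (hne : ∀ t ∈ S, a t e₀ ≠ 0)
    (hXu : ∀ t ∈ S, IsUnit (XF W0 (q t) (a t) e₀)) :
    ContDiffOn ℝ (⊤ : ℕ∞) (fun t => PF W0 (q t) (a t) e₀) S := by
  obtain ⟨hCF, hXF⟩ := contDiffOn_XF (W0 := W0) hq ha hne
  have hiX : ContDiffOn ℝ (⊤ : ℕ∞) (fun t => Ring.inverse (XF W0 (q t) (a t) e₀)) S := by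
    intro t ht
    obtain ⟨u, hu⟩ := hXu t ht
    have h1 : ContDiffAt ℝ (⊤ : ℕ∞) Ring.inverse (XF W0 (q t) (a t) e₀) :=
      hu ▸ contDiffAt_ringInverse ℝ u
    exact (h1.comp t ((hXF t ht).contDiffAt (hS.mem_nhds ht))).contDiffWithinAt
  simp only [PF, WF]
  exact hq.contDiffOn.add
    (((hCF.mul contDiffOn_const).mul hiX).mul (contDiffOn_const.mul hCF))

end Stmt8Aux
namespace Stmt8Aux

open Module

set_option maxHeartbeats 2000000
set_option synthInstance.maxHeartbeats 1000000

/-- Analytic clamp: `ρ δ` maps `ℝ` into `(-δ, δ)`, fixes `0`, has derivative `1` at `0`. -/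
def rho (δ : ℝ) (t : ℝ) : ℝ := δ ^ 2 * t / (δ ^ 2 + t ^ 2)

lemma rho_contDiff {δ : ℝ} (hδ : 0 < δ) : ContDiff ℝ (⊤ : ℕ∞) (rho δ) := by
  apply ContDiff.div
  · exact contDiff_const.mul contDiff_id
  · exact contDiff_const.add (contDiff_id.pow 2)
  · intro t
    positivity

lemma rho_zero (δ : ℝ) : rho δ 0 = 0 := by simp [rho]

lemma rho_mem_ball {δ : ℝ} (hδ : 0 < δ) (t : ℝ) : rho δ t ∈ Metric.ball (0 : ℝ) δ := by
  rw [Metric.mem_ball, Real.dist_eq, sub_zero]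
  have hden : 0 < δ ^ 2 + t ^ 2 := by positivity
  rw [rho, abs_div, abs_of_pos hden, abs_mul, abs_of_pos (by positivity : (0:ℝ) < δ ^ 2),
    div_lt_iff₀ hden]
  nlinarith [sq_nonneg (δ - |t|), sq_abs t, abs_nonneg t]

lemma rho_hasDerivAt {δ : ℝ} (hδ : 0 < δ) : HasDerivAt (rho δ) 1 0 := by
  have h1 : HasDerivAt (fun t : ℝ => δ ^ 2 * t) (δ ^ 2) 0 := by
    simpa using (hasDerivAt_id (0:ℝ)).const_mul (δ ^ 2)
  have h2 : HasDerivAt (fun t : ℝ => δ ^ 2 + t ^ 2) 0 0 := by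
    have := (hasDerivAt_pow 2 (0:ℝ)).const_add (δ ^ 2)
    simpa using this
  have h3 := h1.div h2 (by positivity : δ ^ 2 + (0:ℝ) ^ 2 ≠ 0)
  refine HasDerivAt.congr_deriv h3 ?_
  rw [div_eq_iff (by positivity)]
  ring

end Stmt8Aux

set_option maxHeartbeats 2000000
set_option synthInstance.maxHeartbeats 1000000

/-- For `k = 1`, `1 < m < n`, the natural projection
`T*_Z(Gr₁ × Gr_m) \ 0 → T*Gr₁ \ 0`, `(l, H, v) ↦ (l, (id_l ⊗ p*) v)` — in the operator model
`(Q,P,A) ↦ (Q,A)` — is a submersion: its differential maps the tangent space of the source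
onto the tangent space of the target at every point. -/
theorem stmt8 (m : ℕ) (h1m : 1 < m) (hmn : m < n) :
    ∀ s ∈ ConormalZ n m,
      (s.1, s.2.2) ∈ CotGr1 n ∧
      ∀ w ∈ tangentSetAt (CotGr1 n) (s.1, s.2.2),
        ∃ u ∈ tangentSetAt (ConormalZ n m) s, (u.1, u.2.2) = w := by
  rintro ⟨Q₀, P₀, A₀⟩ hs
  obtain ⟨hQ, hP, hQP, hAQ, hPA, hA⟩ := hs
  have hQ2 : Q₀ * Q₀ = Q₀ := (ContinuousLinearMap.mul_def Q₀ Q₀).trans hQ.1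
  have hQs : star Q₀ = Q₀ := (ContinuousLinearMap.star_eq_adjoint Q₀).trans hQ.2.1
  have hP2 : P₀ * P₀ = P₀ := (ContinuousLinearMap.mul_def P₀ P₀).trans hP.1
  have hPs : star P₀ = P₀ := (ContinuousLinearMap.star_eq_adjoint P₀).trans hP.2.1
  have hQA : LinearMap.range (Q₀ : V n →ₗ[ℝ] V n) ≤ LinearMap.ker (A₀ : V n →ₗ[ℝ] V n) := le_trans hQP hPA
  refine ⟨⟨hQ, hAQ, hQA, hA⟩, ?_⟩
  intro w hw
  obtain ⟨γ, hγ, hγ0, hγmem, hγd⟩ := hw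
  set q : ℝ → V n →L[ℝ] V n := fun t => (γ t).1 with hqdef
  set a : ℝ → V n →L[ℝ] V n := fun t => (γ t).2 with hadef
  have hq : ContDiff ℝ (⊤ : ℕ∞) q := hγ.fst
  have ha : ContDiff ℝ (⊤ : ℕ∞) a := hγ.snd
  have hq0 : q 0 = Q₀ := by simp only [hqdef, hγ0]
  have ha0 : a 0 = A₀ := by simp only [hadef, hγ0]
  set W0 : V n →L[ℝ] V n := P₀ - Q₀ with hW0def
  have hPQ0 : P₀ * Q₀ = Q₀ := Stmt8Aux.mul_eq_of_range_le hP2 hQP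
  have hQP0 : Q₀ * P₀ = Q₀ := by
    have h := congrArg star hPQ0
    rwa [star_mul, hQs, hPs] at h
  have hW2 : W0 * W0 = W0 := by
    rw [hW0def]
    simp only [sub_mul, mul_sub, hP2, hPQ0, hQP0, hQ2]
    abel
  have hWs : star W0 = W0 := by
    rw [hW0def]
    rw [star_sub P₀ Q₀, hPs, hQs]
  have hQW0 : Q₀ * W0 = 0 := by
    rw [hW0def, mul_sub, hQP0, hQ2, sub_self]
  have hW0Q : W0 * Q₀ = 0 := by
    rw [hW0def, sub_mul, hPQ0, hQ2, sub_self]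
  have hAP0 : A₀ * P₀ = 0 := Stmt8Aux.mul_eq_zero_of_range_le_ker hPA
  have hAQ0 : A₀ * Q₀ = 0 := Stmt8Aux.mul_eq_zero_of_range_le_ker hQA
  have hAW0 : A₀ * W0 = 0 := by
    rw [hW0def, mul_sub, hAP0, hAQ0, sub_zero]
  have hQW0sum : Q₀ + W0 = P₀ := by rw [hW0def]; abel
  have hm : 1 + Module.finrank ℝ (LinearMap.range (W0 : V n →ₗ[ℝ] V n)) = m := by
    have h := Stmt8Aux.rank_add hQ2 hW2 hQW0 hW0Q
    rw [hQW0sum, hP.2.2, hQ.2.2] at h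
    exact h.symm
  obtain ⟨e₀, he₀⟩ : ∃ e₀, A₀ e₀ ≠ 0 := by
    by_contra h
    push_neg at h
    exact hA (ContinuousLinearMap.ext fun x => by simpa using h x)
  have hacont : Continuous fun t => a t e₀ := (ha.clm_apply contDiff_const).continuous
  have hev2 : ∀ᶠ t in nhds (0:ℝ), a t e₀ ≠ 0 :=
    hacont.continuousAt.eventually_ne (by rw [ha0]; exact he₀)
  obtain ⟨hCF1, hXF1⟩ := Stmt8Aux.contDiffOn_XF (W0 := W0) (e₀ := e₀)
    (S := {t : ℝ | a t e₀ ≠ 0}) hq ha (fun t ht => ht)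
  have hS1 : IsOpen {t : ℝ | a t e₀ ≠ 0} := isOpen_ne.preimage hacont
  have h0S1 : (0:ℝ) ∈ {t : ℝ | a t e₀ ≠ 0} := by
    simp only [Set.mem_setOf_eq, ha0]; exact he₀
  have hXcont : ContinuousAt (fun t => Stmt8Aux.XF W0 (q t) (a t) e₀) 0 :=
    hXF1.continuousOn.continuousAt (hS1.mem_nhds h0S1)
  have hX0 : Stmt8Aux.XF W0 (q 0) (a 0) e₀ = 1 := by
    rw [hq0, ha0]
    exact (Stmt8Aux.base_point e₀ hQs hWs hW2 hQW0 hAW0).1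
  have hev1 : ∀ᶠ t in nhds (0:ℝ), IsUnit (Stmt8Aux.XF W0 (q t) (a t) e₀) :=
    hXcont.preimage_mem_nhds (Units.isOpen.mem_nhds (by rw [hX0]; exact isUnit_one))
  obtain ⟨δ, hδpos, hδ⟩ := Metric.eventually_nhds_iff.1 (hev2.and hev1)
  have hSgood : ∀ t ∈ Metric.ball (0:ℝ) δ,
      a t e₀ ≠ 0 ∧ IsUnit (Stmt8Aux.XF W0 (q t) (a t) e₀) := by
    intro t ht
    exact hδ (by simpa [Metric.mem_ball] using ht)
  have hPFs : ContDiffOn ℝ (⊤ : ℕ∞) (fun t => Stmt8Aux.PF W0 (q t) (a t) e₀)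
      (Metric.ball (0:ℝ) δ) :=
    Stmt8Aux.contDiffOn_PF Metric.isOpen_ball hq ha (fun t ht => (hSgood t ht).1)
      (fun t ht => (hSgood t ht).2)
  set F : ℝ → (V n →L[ℝ] V n) × (V n →L[ℝ] V n) × (V n →L[ℝ] V n) :=
    fun t => (q t, Stmt8Aux.PF W0 (q t) (a t) e₀, a t) with hFdef
  have hFOn : ContDiffOn ℝ (⊤ : ℕ∞) F (Metric.ball (0:ℝ) δ) :=
    hq.contDiffOn.prodMk (hPFs.prodMk ha.contDiffOn)
  set dlt : ℝ → (V n →L[ℝ] V n) × (V n →L[ℝ] V n) × (V n →L[ℝ] V n) :=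
    fun t => F (Stmt8Aux.rho δ t) with hdltdef
  have hdlt : ContDiff ℝ (⊤ : ℕ∞) dlt :=
    hFOn.comp_contDiff (Stmt8Aux.rho_contDiff hδpos)
      (fun t => Stmt8Aux.rho_mem_ball hδpos t)
  refine ⟨deriv dlt 0, ⟨dlt, hdlt, ?_, ?_, rfl⟩, ?_⟩
  · -- `dlt 0` is the base point
    show F (Stmt8Aux.rho δ 0) = _
    rw [Stmt8Aux.rho_zero, hFdef]
    have hbase := (Stmt8Aux.base_point (A := A₀) e₀ hQs hWs hW2 hQW0 hAW0).2
    simp only [hq0, ha0]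
    rw [hbase, hQW0sum]
  · -- the curve stays in the conormal variety
    intro t
    obtain ⟨hne, hXu⟩ := hSgood _ (Stmt8Aux.rho_mem_ball hδpos t)
    obtain ⟨hQt, hAQt, hQAt, hAt⟩ := hγmem (Stmt8Aux.rho δ t)
    have hQ2t : q (Stmt8Aux.rho δ t) * q (Stmt8Aux.rho δ t) = q (Stmt8Aux.rho δ t) :=
      (ContinuousLinearMap.mul_def _ _).trans hQt.1
    have hQst : star (q (Stmt8Aux.rho δ t)) = q (Stmt8Aux.rho δ t) :=
      (ContinuousLinearMap.star_eq_adjoint _).trans hQt.2.1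
    obtain ⟨p1, p2, p3, p4, p5⟩ := Stmt8Aux.conormal_main hQ2t hQst hQt.2.2
      hAQt hQAt hW2 hWs hne hXu
    exact ⟨hQt, ⟨(ContinuousLinearMap.mul_def _ _).symm.trans p1,
      (ContinuousLinearMap.star_eq_adjoint _).symm.trans p2, by rw [p3, hm]⟩,
      p4, hAQt, p5, hAt⟩
  · -- the projected derivative is `w`
    have hu : HasDerivAt dlt (deriv dlt 0) 0 :=
      ((hdlt.differentiable (by simp)).differentiableAt).hasDerivAt
    set π : ((V n →L[ℝ] V n) × (V n →L[ℝ] V n) × (V n →L[ℝ] V n)) →L[ℝ]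
        ((V n →L[ℝ] V n) × (V n →L[ℝ] V n)) :=
      (ContinuousLinearMap.fst ℝ _ _).prod
        ((ContinuousLinearMap.snd ℝ _ _).comp (ContinuousLinearMap.snd ℝ _ _)) with hπdef
    have hπapp : ∀ x : (V n →L[ℝ] V n) × (V n →L[ℝ] V n) × (V n →L[ℝ] V n),
        π x = (x.1, x.2.2) := fun x => rfl
    have h2 : HasDerivAt (fun t => π (dlt t)) (π (deriv dlt 0)) 0 :=
      π.hasFDerivAt.comp_hasDerivAt 0 hu
    have h3 : (fun t => π (dlt t)) = fun t => γ (Stmt8Aux.rho δ t) := by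
      funext t; rfl
    have hγdiff : HasDerivAt γ (deriv γ 0) (Stmt8Aux.rho δ 0) := by
      rw [Stmt8Aux.rho_zero]
      exact ((hγ.differentiable (by simp)).differentiableAt).hasDerivAt
    have h4 : HasDerivAt (fun t => γ (Stmt8Aux.rho δ t)) ((1:ℝ) • deriv γ 0) 0 :=
      hγdiff.scomp 0 (Stmt8Aux.rho_hasDerivAt hδpos)
    rw [h3] at h2
    have h5 : π (deriv dlt 0) = deriv γ 0 := by
      have h6 := h2.unique h4
      rwa [one_smul] at h6
    rw [← hπapp, h5]
    exact hγd
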